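/- arXiv:1212.0054 — 2 statements merged into one kernel-verified Lean document; each statement's English description precedes it below -/
import Mathlib

section
/- Let X be a real Banach space, 1 ≤ p < ∞, on which ⊥_p is additive, and let U be a total p-orthonormal set in X. Then X is isometrically isomorphic to ℓ^p(U). -/
/-!
Additivity of `⊥_p` lets one peel off the vectors of a finite p-orthonormal family one at a time,
so `‖∑ cᵤ • u‖ ^ p = ∑ |cᵤ| ^ p` for finite sums. Hence `c ↦ ∑' cᵤ • u` converges on `ℓ^p(U)`
(the partial sums are Cauchy) and is a linear isometry into `X`. Its range is closed, contains `U`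
and hence the dense span of `U`, so it is onto.
-/

open scoped ENNReal

/-- `x ⊥_p y`: `‖x + k • y‖ ^ p = ‖x‖ ^ p + ‖k • y‖ ^ p` for all `k : ℝ`. -/
def PerpP {X : Type*} [NormedAddCommGroup X] [NormedSpace ℝ X] (p : ℝ) (x y : X) : Prop :=
  ∀ k : ℝ, ‖x + k • y‖ ^ p = ‖x‖ ^ p + ‖k • y‖ ^ p

section PerpP

variable {X : Type*} [NormedAddCommGroup X] [NormedSpace ℝ X] {p : ℝ}

theorem norm_smul_rpow (c : ℝ) (x : X) : ‖c • x‖ ^ p = ‖c‖ ^ p * ‖x‖ ^ p := by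
  rw [norm_smul, Real.mul_rpow (norm_nonneg c) (norm_nonneg x)]

theorem PerpP.smul_right {x y : X} (h : PerpP p x y) (c : ℝ) : PerpP p x (c • y) := fun k => by
  rw [smul_smul]
  exact h (k * c)

theorem perpP_zero_right (hp : p ≠ 0) (x : X) : PerpP p x 0 := fun k => by
  simp [Real.zero_rpow hp]

theorem PerpP.smul_left (hp : p ≠ 0) {x y : X} (h : PerpP p x y) (c : ℝ) :
    PerpP p (c • x) y := by
  intro k
  rcases eq_or_ne c 0 with rfl | hc
  · simp [Real.zero_rpow hp]
  · have hsum : c • x + k • y = c • (x + (k / c) • y) := by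
      rw [smul_add, smul_smul, mul_div_cancel₀ _ hc]
    have hy : k • y = c • ((k / c) • y) := by
      rw [smul_smul, mul_div_cancel₀ _ hc]
    rw [hsum, hy, norm_smul_rpow, h, mul_add, ← norm_smul_rpow, ← norm_smul_rpow]

variable {ι : Type*} {v : ι → X}

theorem perpP_sum_smul_of_notMem (hp : p ≠ 0)
    (hadd : ∀ a b c : X, PerpP p a b → PerpP p a c → PerpP p a (b + c))
    (horth : Pairwise fun i j => PerpP p (v i) (v j)) (c : ι → ℝ) {i : ι} {s : Finset ι}
    (hi : i ∉ s) : PerpP p (v i) (∑ j ∈ s, c j • v j) := by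
  induction s using Finset.cons_induction with
  | empty => simpa using perpP_zero_right hp (v i)
  | cons j s hj ih =>
    rw [Finset.mem_cons, not_or] at hi
    rw [Finset.sum_cons]
    exact hadd _ _ _ ((horth hi.1).smul_right _) (ih hi.2)

theorem norm_sum_smul_rpow (hp : p ≠ 0)
    (hadd : ∀ a b c : X, PerpP p a b → PerpP p a c → PerpP p a (b + c))
    (hnorm : ∀ i, ‖v i‖ = 1) (horth : Pairwise fun i j => PerpP p (v i) (v j)) (c : ι → ℝ)
    (s : Finset ι) : ‖∑ i ∈ s, c i • v i‖ ^ p = ∑ i ∈ s, ‖c i‖ ^ p := by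
  induction s using Finset.cons_induction with
  | empty => simp [Real.zero_rpow hp]
  | cons i s hi ih =>
    have h := (perpP_sum_smul_of_notMem hp hadd horth c hi).smul_left hp (c i) 1
    rw [one_smul] at h
    rw [Finset.sum_cons, Finset.sum_cons, h, ih, norm_smul_rpow, hnorm, Real.one_rpow, mul_one]

end PerpP

section Synthesis

variable {X : Type*} [NormedAddCommGroup X] [NormedSpace ℝ X] {ι : Type*} {v : ι → X}
  {p : ℝ≥0∞}

theorem summable_smul_of_memℓp [CompleteSpace X] (hp : 0 < p.toReal)
    (hadd : ∀ a b c : X, PerpP p.toReal a b → PerpP p.toReal a c → PerpP p.toReal a (b + c))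
    (hnorm : ∀ i, ‖v i‖ = 1) (horth : Pairwise fun i j => PerpP p.toReal (v i) (v j))
    {c : ι → ℝ} (hc : Memℓp c p) : Summable fun i => c i • v i := by
  rw [summable_iff_vanishing_norm]
  intro ε hε
  obtain ⟨s, hs⟩ := summable_iff_vanishing_norm.1 (hc.summable hp) (ε ^ p.toReal) (by positivity)
  refine ⟨s, fun t ht => ?_⟩
  have h := hs t ht
  rw [← norm_sum_smul_rpow hp.ne' hadd hnorm horth, Real.norm_of_nonneg (by positivity)] at h
  exact (Real.rpow_lt_rpow_iff (norm_nonneg _) hε.le hp).1 h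

theorem HasSum.norm_rpow_of_perpP (hp : 0 < p.toReal)
    (hadd : ∀ a b c : X, PerpP p.toReal a b → PerpP p.toReal a c → PerpP p.toReal a (b + c))
    (hnorm : ∀ i, ‖v i‖ = 1) (horth : Pairwise fun i j => PerpP p.toReal (v i) (v j))
    {c : ι → ℝ} {x : X} (h : HasSum (fun i => c i • v i) x) :
    HasSum (fun i => ‖c i‖ ^ p.toReal) (‖x‖ ^ p.toReal) := by
  have hlim := (Real.continuousAt_rpow_const _ p.toReal (Or.inr hp.le)).tendsto.comp h.norm
  exact hlim.congr fun s => norm_sum_smul_rpow hp.ne' hadd hnorm horth c s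

theorem exists_linearIsometry_lp_hasSum [CompleteSpace X] [Fact (1 ≤ p)] (hp : 0 < p.toReal)
    (hadd : ∀ a b c : X, PerpP p.toReal a b → PerpP p.toReal a c → PerpP p.toReal a (b + c))
    (hnorm : ∀ i, ‖v i‖ = 1) (horth : Pairwise fun i j => PerpP p.toReal (v i) (v j)) :
    ∃ T : lp (fun _ : ι => ℝ) p →ₗᵢ[ℝ] X, ∀ f, HasSum (fun i => f i • v i) (T f) := by
  have hs (f : lp (fun _ : ι => ℝ) p) := summable_smul_of_memℓp hp hadd hnorm horth f.2
  refine ⟨{ toFun f := ∑' i, f i • v i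
            map_add' f g := ?_
            map_smul' a f := ?_
            norm_map' f := ?_ }, fun f => (hs f).hasSum⟩
  · simp only [lp.coeFn_add, Pi.add_apply, add_smul]
    exact (hs f).tsum_add (hs g)
  · simp only [lp.coeFn_smul, Pi.smul_apply, smul_assoc, RingHom.id_apply]
    exact (hs f).tsum_const_smul a
  · rw [← Real.rpow_left_inj (norm_nonneg _) (norm_nonneg _) hp.ne', lp.norm_rpow_eq_tsum hp]
    exact ((hs f).hasSum.norm_rpow_of_perpP hp hadd hnorm horth).tsum_eq.symm

end Synthesis

theorem LinearIsometry.surjective_of_subset_range {𝕜 E F : Type*} [NormedField 𝕜]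
    [NormedAddCommGroup E] [NormedSpace 𝕜 E] [CompleteSpace E] [NormedAddCommGroup F]
    [NormedSpace 𝕜 F] (T : E →ₗᵢ[𝕜] F) {s : Set F} (hs : s ⊆ Set.range T)
    (hdense : Dense (Submodule.span 𝕜 s : Set F)) : Function.Surjective T := by
  have hspan : (Submodule.span 𝕜 s : Set F) ⊆ Set.range T :=
    Submodule.span_le (p := LinearMap.range T.toLinearMap) |>.2 hs
  have hclosure := (hdense.mono hspan).closure_eq
  rwa [T.isometry.isClosedEmbedding.isClosed_range.closure_eq, Set.range_eq_univ] at hclosure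

theorem stmt5 {X : Type*} [NormedAddCommGroup X] [NormedSpace ℝ X] [CompleteSpace X]
    (p : ℝ≥0∞) [Fact (1 ≤ p)] (hp : p ≠ ∞)
    (hadd : ∀ a b c : X, PerpP p.toReal a b → PerpP p.toReal a c → PerpP p.toReal a (b + c))
    (U : Set X)
    (hnorm : ∀ u ∈ U, ‖u‖ = 1)
    (horth : ∀ x ∈ U, ∀ y ∈ U, x ≠ y → PerpP p.toReal x y)
    (htotal : Dense (Submodule.span ℝ U : Set X)) :
    Nonempty (X ≃ₗᵢ[ℝ] lp (fun _ : U => ℝ) p) := by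
  classical
  have hp0 : 0 < p.toReal := ENNReal.toReal_pos (zero_lt_one.trans_le (Fact.out : 1 ≤ p)).ne' hp
  have horth' : Pairwise fun u w : U => PerpP p.toReal (u : X) w :=
    fun u w huw => horth u u.2 w w.2 (Subtype.coe_injective.ne huw)
  obtain ⟨T, hT⟩ := exists_linearIsometry_lp_hasSum hp0 hadd (fun u : U => hnorm u u.2) horth'
  have hU : U ⊆ Set.range T := by
    intro u hu
    let e : lp (fun _ : U => ℝ) p := lp.single p ⟨u, hu⟩ 1
    refine ⟨e, (hT e).unique ?_⟩
    simpa [e] using hasSum_single (f := fun w : U => e w • (w : X)) ⟨u, hu⟩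
      fun w hw => by simp only [e, lp.single_apply_ne p _ _ hw, zero_smul]
  exact ⟨(LinearIsometryEquiv.ofSurjective T (T.surjective_of_subset_range hU htotal)).symm⟩
end

section
/- Let X be a real Banach space on which ⊥_∞ is additive, and let U be a total ∞-orthonormal set in X. Then X is isometrically isomorphic to c₀(U). -/
open scoped ENNReal

/-- `x ⊥_∞ y`: `‖x + k • y‖ = max ‖x‖ ‖k • y‖` for all `k : ℝ`. -/
def PerpInf {X : Type*} [NormedAddCommGroup X] [NormedSpace ℝ X] (x y : X) : Prop :=
  ∀ k : ℝ, ‖x + k • y‖ = max ‖x‖ ‖k • y‖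

/-- `c₀(I)`: the closure, in `ℓ^∞(I)`, of the span of the standard basis vectors,
i.e. the space of functions on `I` vanishing at infinity, with the sup norm. -/
noncomputable def cZero (I : Type*) [DecidableEq I] : Submodule ℝ (lp (fun _ : I => ℝ) ∞) :=
  (Submodule.span ℝ (Set.range fun i : I => lp.single ∞ i (1 : ℝ))).topologicalClosure

/-! Additivity of `⊥_∞` makes each `u ∈ U` ∞-orthogonal to every combination of the other
elements of `U`, so `‖∑ aᵤ • u‖ = maxᵤ |aᵤ|`, which is also the norm of `∑ aᵤ • eᵤ` in `ℓ^∞(U)`.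
Hence `u ↦ eᵤ` is an isometry between two dense subspaces, and it extends to an isometric
isomorphism of their completions `X` and `c₀(U)`. -/

open scoped NNReal

namespace PerpInf

variable {X : Type*} [NormedAddCommGroup X] [NormedSpace ℝ X]

theorem zero_right (x : X) : PerpInf x 0 := by
  intro k
  simp

theorem smul_right {x y : X} (h : PerpInf x y) (a : ℝ) : PerpInf x (a • y) := by
  intro k
  rw [smul_smul]
  exact h (k * a)

theorem norm_smul_add {x z : X} (h : PerpInf x z) (a : ℝ) :
    ‖a • x + z‖ = max ‖a • x‖ ‖z‖ := by
  rcases eq_or_ne a 0 with rfl | ha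
  · simp
  · calc ‖a • x + z‖ = ‖a‖ * ‖x + a⁻¹ • z‖ := by
          rw [← norm_smul, smul_add, smul_inv_smul₀ ha]
      _ = max ‖a • x‖ ‖z‖ := by
          rw [h, mul_max_of_nonneg _ _ (norm_nonneg a), ← norm_smul, ← norm_smul,
            smul_inv_smul₀ ha]

theorem finset_sum_smul_right
    (hadd : ∀ a b c : X, PerpInf a b → PerpInf a c → PerpInf a (b + c))
    {ι : Type*} {x : X} {y : ι → X} {s : Finset ι} (h : ∀ i ∈ s, PerpInf x (y i)) (a : ι → ℝ) :
    PerpInf x (∑ i ∈ s, a i • y i) := by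
  classical
  induction s using Finset.induction_on with
  | empty => simpa using zero_right x
  | insert j s hj ih =>
    rw [Finset.sum_insert hj]
    exact hadd _ _ _ ((h j (s.mem_insert_self j)).smul_right _)
      (ih fun i hi => h i (Finset.mem_insert_of_mem hi))

end PerpInf

theorem norm_finset_sum_smul_eq_sup_of_perpInf {X ι : Type*} [NormedAddCommGroup X]
    [NormedSpace ℝ X] (hadd : ∀ a b c : X, PerpInf a b → PerpInf a c → PerpInf a (b + c))
    {v : ι → X} (hnorm : ∀ i, ‖v i‖ = 1) (horth : Pairwise fun i j => PerpInf (v i) (v j))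
    (s : Finset ι) (a : ι → ℝ) :
    ‖∑ i ∈ s, a i • v i‖ = (s.sup fun i => ‖a i‖₊ : ℝ≥0) := by
  classical
  induction s using Finset.induction_on with
  | empty => simp
  | insert j s hj ih =>
    have hperp : PerpInf (v j) (∑ i ∈ s, a i • v i) :=
      PerpInf.finset_sum_smul_right hadd (fun i hi => horth (ne_of_mem_of_not_mem hi hj).symm) a
    rw [Finset.sum_insert hj, hperp.norm_smul_add, ih, Finset.sup_insert, NNReal.coe_max,
      norm_smul, hnorm, mul_one, coe_nnnorm]

theorem lp.norm_finset_sum_smul_single_top {ι : Type*} [DecidableEq ι] (s : Finset ι)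
    (a : ι → ℝ) :
    ‖∑ i ∈ s, a i • lp.single ∞ i (1 : ℝ)‖ = (s.sup fun i => ‖a i‖₊ : ℝ≥0) := by
  set f : lp (fun _ : ι => ℝ) ∞ := ∑ i ∈ s, a i • lp.single ∞ i (1 : ℝ)
  have hf (j : ι) : f j = if j ∈ s then a j else 0 := by
    rw [lp.coeFn_sum, Finset.sum_apply]
    simp [Pi.single_apply]
  refine le_antisymm (lp.norm_le_of_forall_le (by positivity) fun j => ?_) ?_
  · rw [hf]
    split_ifs with hj
    · exact_mod_cast Finset.le_sup (f := fun i => ‖a i‖₊) hj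
    · simp
  · rw [← coe_nnnorm f]
    refine NNReal.coe_le_coe.mpr (Finset.sup_le fun j hj => ?_)
    have := lp.norm_apply_le_norm ENNReal.top_ne_zero f j
    rw [hf, if_pos hj] at this
    exact_mod_cast this

open Finsupp in
theorem exists_linearIsometryEquiv_topologicalClosure_span
    {𝕜 ι E F : Type*} [NormedField 𝕜]
    [NormedAddCommGroup E] [NormedSpace 𝕜 E] [CompleteSpace E]
    [NormedAddCommGroup F] [NormedSpace 𝕜 F] [CompleteSpace F]
    (v : ι → E) (w : ι → F) (hv : Dense (Submodule.span 𝕜 (Set.range v) : Set E))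
    (hvw : ∀ c : ι →₀ 𝕜, ‖linearCombination 𝕜 w c‖ = ‖linearCombination 𝕜 v c‖) :
    Nonempty (E ≃ₗᵢ[𝕜] (Submodule.span 𝕜 (Set.range w)).topologicalClosure) := by
  set K := (Submodule.span 𝕜 (Set.range w)).topologicalClosure
  have : CompleteSpace K := (Submodule.isClosed_topologicalClosure _).completeSpace_coe
  have hwK (c : ι →₀ 𝕜) : linearCombination 𝕜 w c ∈ K :=
    Submodule.le_topologicalClosure _ (mem_span_range_iff_exists_finsupp.mpr ⟨c, rfl⟩)
  let e₂ : (ι →₀ 𝕜) →ₗ[𝕜] K := (linearCombination 𝕜 w).codRestrict K hwK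
  have h_dense₁ : DenseRange (linearCombination 𝕜 v) := by
    rwa [DenseRange, ← LinearMap.coe_range, range_linearCombination]
  have h_dense₂ : DenseRange e₂ := by
    intro x
    rw [closure_subtype, ← Set.range_comp]
    have hrange : Set.range (Subtype.val ∘ e₂) = Submodule.span 𝕜 (Set.range w) := by
      rw [← range_linearCombination, LinearMap.coe_range]
      rfl
    rw [hrange]
    exact x.2
  exact ⟨(LinearEquiv.refl 𝕜 _).extendOfIsometry _ e₂ h_dense₁ h_dense₂ hvw⟩

theorem stmt6 {X : Type*} [NormedAddCommGroup X] [NormedSpace ℝ X] [CompleteSpace X]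
    (hadd : ∀ a b c : X, PerpInf a b → PerpInf a c → PerpInf a (b + c))
    (U : Set X) [DecidableEq U]
    (hnorm : ∀ u ∈ U, ‖u‖ = 1)
    (horth : ∀ x ∈ U, ∀ y ∈ U, x ≠ y → PerpInf x y)
    (htotal : Dense (Submodule.span ℝ U : Set X)) :
    Nonempty (X ≃ₗᵢ[ℝ] cZero U) := by
  have horth' : Pairwise fun u v : U => PerpInf (u : X) v :=
    fun u v huv => horth u u.2 v v.2 (Subtype.coe_ne_coe.mpr huv)
  refine exists_linearIsometryEquiv_topologicalClosure_span (↑) _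
    (by rwa [Subtype.range_coe]) fun c => ?_
  simp only [Finsupp.linearCombination_apply, Finsupp.sum]
  rw [lp.norm_finset_sum_smul_single_top,
    norm_finset_sum_smul_eq_sup_of_perpInf hadd (fun u : U => hnorm u u.2) horth']
end
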